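/- arXiv:1401.0247 — 6 statements merged into one kernel-verified Lean document; each statement's English description precedes it below -/
import Mathlib

section
/- Suppose the similarity ranking satisfies the (α,ν)-good neighborhood property for the clustering (C_1,…,C_k). Then for every cluster C_i, every good point x ∈ G_i, and every integer t with 1 ≤ t ≤ n_{C_i}, at most (α+ν)n of the t nearest neighbors of x in S lie outside G_i; that is, |N_t(x) ∖ G_i| ≤ (α+ν)n. -/
open Finset

/-- The `t` nearest neighbors of `x` in the whole point set:
all points whose rank (w.r.t. decreasing similarity to `x`) is below `t`. -/
def nearest {V : Type*} [Fintype V] [DecidableEq V] (r : V → V → ℕ) (x : V) (t : ℕ) :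
    Finset V :=
  Finset.univ.filter fun y => r x y < t

/-- The `s` nearest neighbors of `x` within a subset `T`:
the elements `y ∈ T` such that at most `s` elements of `T` have rank at most that of `y`. -/
def nearestIn {V : Type*} [Fintype V] [DecidableEq V] (r : V → V → ℕ) (x : V)
    (T : Finset V) (s : ℕ) : Finset V :=
  T.filter fun y => (T.filter fun z => r x z ≤ r x y).card ≤ s

/-- `B` witnesses the `(α,ν)`-good neighborhood property for the clustering `C`:
for every `i`, every `x ∈ G_i = C_i \ B` has at most `α·n` of its `|G_i|` nearest
neighbors within `G = S \ B` lying outside `G_i`. -/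
def GoodCond {V : Type*} [Fintype V] [DecidableEq V] {k : ℕ} (r : V → V → ℕ)
    (C : Fin k → Finset V) (α : ℝ) (B : Finset V) : Prop :=
  ∀ i : Fin k, ∀ x ∈ C i \ B,
    (((nearestIn r x (Finset.univ \ B) ((C i \ B).card)) \ (C i \ B)).card : ℝ)
      ≤ α * (Fintype.card V)

lemma rank_count_lt {V : Type*} [DecidableEq V] (f : V → ℕ) (S : Finset V) {a b : V}
    (hb : b ∈ S) (h : f a < f b) :
    (S.filter fun z => f z ≤ f a).card < (S.filter fun z => f z ≤ f b).card := by
  apply Finset.card_lt_card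
  have hsub : (S.filter fun z => f z ≤ f a) ⊆ (S.filter fun z => f z ≤ f b) := by
    intro z hz
    rw [Finset.mem_filter] at hz ⊢
    exact ⟨hz.1, le_trans hz.2 (le_of_lt h)⟩
  rw [Finset.ssubset_iff_of_subset hsub]
  exact ⟨b, Finset.mem_filter.mpr ⟨hb, le_refl _⟩, by simp; omega⟩

theorem nearest_neighbors_mostly_good
    {V : Type*} [Fintype V] [DecidableEq V] {k : ℕ}
    (r : V → V → ℕ) (C : Fin k → Finset V) (α ν : ℝ) (B : Finset V)
    (hn : 0 < Fintype.card V)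
    (hα : 0 ≤ α) (hν : 0 ≤ ν)
    (hrinj : ∀ x : V, Function.Injective (r x))
    (hrlt : ∀ x y : V, r x y < Fintype.card V)
    (hdis : ∀ i j : Fin k, i ≠ j → Disjoint (C i) (C j))
    (hcov : ∀ x : V, ∃ i : Fin k, x ∈ C i)
    (hB : (B.card : ℝ) ≤ ν * (Fintype.card V))
    (hgood : GoodCond r C α B) :
    ∀ i : Fin k, ∀ x ∈ C i \ B, ∀ t : ℕ, 1 ≤ t → t ≤ (C i).card →
      (((nearest r x t) \ (C i \ B)).card : ℝ) ≤ (α + ν) * (Fintype.card V) := by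
  intro i x hx t ht1 ht2
  set G : Finset V := Finset.univ \ B with hG
  set Gi : Finset V := C i \ B with hGi
  set gi := Gi.card with hgi
  set NI := nearestIn r x G gi with hNI
  set Nt := nearest r x t with hNt
  set A : Finset V := Nt \ B with hA
  have hmemNt : ∀ y : V, y ∈ Nt ↔ r x y < t := by
    intro y
    rw [hNt, nearest, mem_filter]
    simp
  have hmemNI : ∀ y : V, y ∈ NI ↔ y ∈ G ∧ (G.filter fun z => r x z ≤ r x y).card ≤ gi := by
    intro y
    rw [hNI, nearestIn, mem_filter]
  -- covering
  have hcover : Nt \ Gi ⊆ (Nt ∩ B) ∪ ((NI \ Gi) ∪ (A \ NI)) := by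
    intro y hy
    simp only [mem_sdiff, mem_union, mem_inter, hA] at hy ⊢
    obtain ⟨hyN, hyGi⟩ := hy
    by_cases hyB : y ∈ B
    · exact Or.inl ⟨hyN, hyB⟩
    by_cases hyNI : y ∈ NI
    · exact Or.inr (Or.inl ⟨hyNI, hyGi⟩)
    · exact Or.inr (Or.inr ⟨⟨hyN, hyB⟩, hyNI⟩)
  have hcard1 : (Nt \ Gi).card ≤ (Nt ∩ B).card + ((NI \ Gi).card + (A \ NI).card) :=
    (card_le_card hcover).trans ((card_union_le _ _).trans (by gcongr; exact card_union_le _ _))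
  -- |Nt| ≤ t
  have hNtle : Nt.card ≤ t := by
    have h1 : Nt.card = (Nt.image (r x)).card :=
      (Finset.card_image_of_injective _ (hrinj x)).symm
    have h2 : Nt.image (r x) ⊆ Finset.range t := by
      intro m hm
      simp only [mem_image] at hm
      obtain ⟨y, hy, rfl⟩ := hm
      exact mem_range.mpr ((hmemNt y).mp hy)
    calc Nt.card = (Nt.image (r x)).card := h1
      _ ≤ (Finset.range t).card := card_le_card h2
      _ = t := card_range t
  have hsplit : A.card + (Nt ∩ B).card = Nt.card := by
    rw [hA, card_sdiff_add_card_inter]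
  -- key: points of A outside NI have distinct A-ranks in (gi, |A|]
  have hkey : (A \ NI).card ≤ A.card - gi := by
    have hmap : ∀ y ∈ A \ NI,
        (A.filter fun z => r x z ≤ r x y).card ∈ Finset.Icc (gi + 1) A.card := by
      intro y hy
      rw [mem_sdiff] at hy
      obtain ⟨hyA, hyNI⟩ := hy
      have hyAd := hyA
      rw [hA, mem_sdiff] at hyAd
      have hyG : y ∈ G := by rw [hG, mem_sdiff]; exact ⟨mem_univ y, hyAd.2⟩
      have hyt : r x y < t := (hmemNt y).mp hyAd.1
      have heq : (G.filter fun z => r x z ≤ r x y) = (A.filter fun z => r x z ≤ r x y) := by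
        apply Finset.ext
        intro z
        simp only [mem_filter, hA, hG, mem_sdiff, mem_univ, true_and]
        constructor
        · rintro ⟨hzB, hzy⟩
          exact ⟨⟨(hmemNt z).mpr (by omega), hzB⟩, hzy⟩
        · rintro ⟨⟨_, hzB⟩, hzy⟩; exact ⟨hzB, hzy⟩
      rw [mem_Icc]
      constructor
      · have h3 : ¬ ((G.filter fun z => r x z ≤ r x y).card ≤ gi) := by
          intro hc
          exact hyNI ((hmemNI y).mpr ⟨hyG, hc⟩)
        rw [heq] at h3
        omega
      · exact card_le_card (filter_subset _ _)
    have hinj : Set.InjOn (fun y => (A.filter fun z => r x z ≤ r x y).card) ↑(A \ NI) := by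
      intro y hy y' hy' hcard
      by_contra hne
      have hr : r x y ≠ r x y' := fun h => hne (hrinj x h)
      simp only [coe_sdiff, Set.mem_diff, mem_coe] at hy hy'
      rcases Nat.lt_or_ge (r x y) (r x y') with hlt | hge
      · exact absurd hcard (Nat.ne_of_lt (rank_count_lt (r x) A hy'.1 hlt))
      · have hlt' : r x y' < r x y := lt_of_le_of_ne hge (Ne.symm hr)
        exact absurd hcard.symm (Nat.ne_of_lt (rank_count_lt (r x) A hy.1 hlt'))
    calc (A \ NI).card ≤ (Finset.Icc (gi + 1) A.card).card :=
          Finset.card_le_card_of_injOn _ hmap hinj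
      _ = A.card - gi := by rw [Nat.card_Icc]; omega
  -- assemble nat inequality
  have hb1 : (Nt ∩ B).card ≤ B.card := card_le_card inter_subset_right
  have hci : gi + (C i ∩ B).card = (C i).card := by
    rw [hgi, hGi, card_sdiff_add_card_inter]
  have hcib : (C i ∩ B).card ≤ B.card := card_le_card inter_subset_right
  have hnat : (Nt \ Gi).card ≤ (NI \ Gi).card + B.card := by omega
  have hreal : ((Nt \ Gi).card : ℝ) ≤ ((NI \ Gi).card : ℝ) + (B.card : ℝ) := by
    exact_mod_cast hnat
  have hgd : ((NI \ Gi).card : ℝ) ≤ α * (Fintype.card V) := hgood i x hx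
  calc ((Nt \ Gi).card : ℝ) ≤ ((NI \ Gi).card : ℝ) + (B.card : ℝ) := hreal
    _ ≤ α * (Fintype.card V) + ν * (Fintype.card V) := add_le_add hgd hB
    _ = (α + ν) * (Fintype.card V) := by ring
end

section
/- Suppose the similarity ranking satisfies the (α,ν)-good neighborhood property and every cluster satisfies n_{C_j} > 6(α+ν)n. Let t be an integer with 6(α+ν)n < t ≤ n_{C_i} (and t ≤ n). If x ∈ G_i is a good point of C_i and y ∈ G_j is a good point of a different cluster C_j (j ≠ i), then |N_t(x) ∩ N_t(y)| < t − 4(α+ν)n; in particular, x and y share fewer than t − 2(α+ν)n points among their t nearest neighbors. -/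
open Finset
set_option linter.unusedSectionVars false

section Helpers

variable {V : Type*} [Fintype V] [DecidableEq V] (r : V → V → ℕ) (x : V)

private lemma pos_lt_pos {T : Finset V} {z z' : V} (hz' : z' ∈ T) (h : r x z < r x z') :
    (T.filter fun w => r x w ≤ r x z).card < (T.filter fun w => r x w ≤ r x z').card := by
  apply Finset.card_lt_card
  constructor
  · intro w hw
    simp only [Finset.mem_filter] at hw ⊢
    exact ⟨hw.1, hw.2.trans h.le⟩
  · intro hsub
    have := hsub (Finset.mem_filter.2 ⟨hz', le_refl _⟩)
    simp only [Finset.mem_filter] at this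
    omega

private lemma pos_injOn (hinj : Function.Injective (r x)) (T : Finset V) :
    Set.InjOn (fun z => (T.filter fun w => r x w ≤ r x z).card) T := by
  intro a ha b hb hab
  by_contra hne
  have hr : r x a ≠ r x b := fun h => hne (hinj h)
  rcases lt_or_gt_of_ne hr with h | h
  · exact absurd hab (pos_lt_pos r x hb h).ne
  · exact absurd hab.symm (pos_lt_pos r x ha h).ne

private lemma image_pos (hinj : Function.Injective (r x)) (T : Finset V) :
    T.image (fun z => (T.filter fun w => r x w ≤ r x z).card) = Finset.Icc 1 T.card := by
  apply Finset.eq_of_subset_of_card_le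
  · intro m hm
    simp only [Finset.mem_image] at hm
    obtain ⟨z, hz, rfl⟩ := hm
    refine Finset.mem_Icc.2 ⟨?_, ?_⟩
    · exact Finset.card_pos.2 ⟨z, Finset.mem_filter.2 ⟨hz, le_refl _⟩⟩
    · exact Finset.card_le_card (Finset.filter_subset _ _)
  · rw [Nat.card_Icc, Finset.card_image_of_injOn (pos_injOn r x hinj T)]
    omega

private lemma card_nearestIn (hinj : Function.Injective (r x)) (T : Finset V) {s : ℕ}
    (hs : s ≤ T.card) : (nearestIn r x T s).card = s := by
  have himg : (nearestIn r x T s).image (fun z => (T.filter fun w => r x w ≤ r x z).card)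
      = Finset.Icc 1 s := by
    apply Finset.Subset.antisymm
    · intro m hm
      simp only [Finset.mem_image] at hm
      obtain ⟨z, hz, rfl⟩ := hm
      simp only [nearestIn, Finset.mem_filter] at hz
      exact Finset.mem_Icc.2
        ⟨Finset.card_pos.2 ⟨z, Finset.mem_filter.2 ⟨hz.1, le_refl _⟩⟩, hz.2⟩
    · intro m hm
      have hm' : m ∈ Finset.Icc 1 T.card := by
        rw [Finset.mem_Icc] at hm ⊢; omega
      rw [← image_pos r x hinj T] at hm'
      simp only [Finset.mem_image] at hm'
      obtain ⟨z, hz, hzm⟩ := hm'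
      have hz' : z ∈ nearestIn r x T s := by
        simp only [nearestIn, Finset.mem_filter]
        exact ⟨hz, by rw [hzm]; exact (Finset.mem_Icc.1 hm).2⟩
      exact hzm ▸ Finset.mem_image_of_mem _ hz'
  have hsub : nearestIn r x T s ⊆ T := Finset.filter_subset _ _
  calc (nearestIn r x T s).card
      = ((nearestIn r x T s).image (fun z => (T.filter fun w => r x w ≤ r x z).card)).card :=
        (Finset.card_image_of_injOn ((pos_injOn r x hinj T).mono
          (Finset.coe_subset.2 hsub))).symm
    _ = s := by rw [himg, Nat.card_Icc]; omega

private lemma card_nearest (hinj : Function.Injective (r x))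
    (hlt : ∀ y, r x y < Fintype.card V) {t : ℕ} (ht : t ≤ Fintype.card V) :
    (nearest r x t).card = t := by
  have himg : (univ : Finset V).image (r x) = Finset.range (Fintype.card V) := by
    apply Finset.eq_of_subset_of_card_le
    · intro m hm
      simp only [Finset.mem_image] at hm
      obtain ⟨z, _, rfl⟩ := hm
      exact Finset.mem_range.2 (hlt z)
    · rw [Finset.card_range, Finset.card_image_of_injective _ hinj, card_univ]
  have h2 : (nearest r x t).image (r x) = Finset.range t := by
    apply Finset.Subset.antisymm
    · intro m hm
      simp only [Finset.mem_image] at hm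
      obtain ⟨z, hz, rfl⟩ := hm
      simp only [nearest, Finset.mem_filter] at hz
      exact Finset.mem_range.2 hz.2
    · intro m hm
      have hm' : m ∈ (univ : Finset V).image (r x) := by
        rw [himg]
        exact Finset.mem_range.2 (lt_of_lt_of_le (Finset.mem_range.1 hm) ht)
      simp only [Finset.mem_image] at hm'
      obtain ⟨z, _, rfl⟩ := hm'
      exact Finset.mem_image_of_mem _ (by
        simp only [nearest, Finset.mem_filter]
        exact ⟨Finset.mem_univ z, Finset.mem_range.1 hm⟩)
  calc (nearest r x t).card = ((nearest r x t).image (r x)).card :=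
        (Finset.card_image_of_injective _ hinj).symm
    _ = t := by rw [h2, Finset.card_range]

/-- For `z` among the `t` nearest of `x` lying in `T`, everything in `T` at least as
close to `x` is also among the `t` nearest of `x` in `T`. -/
private lemma filterA_subset (T : Finset V) (t : ℕ) {z : V}
    (hz : z ∈ nearest r x t ∩ T) :
    T.filter (fun w => r x w ≤ r x z) ⊆ nearest r x t ∩ T := by
  have hz' := Finset.mem_inter.1 hz
  have hzt : r x z < t := by
    have := hz'.1
    simp only [nearest, Finset.mem_filter] at this
    exact this.2
  intro w hw
  rw [Finset.mem_filter] at hw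
  refine Finset.mem_inter.2 ⟨?_, hw.1⟩
  simp only [nearest, Finset.mem_filter]
  exact ⟨Finset.mem_univ w, lt_of_le_of_lt hw.2 hzt⟩

private lemma inter_subset_nearestIn (T : Finset V) (t : ℕ) :
    nearest r x t ∩ T ⊆ nearestIn r x T (nearest r x t ∩ T).card := by
  intro z hz
  simp only [nearestIn, Finset.mem_filter]
  exact ⟨(Finset.mem_inter.1 hz).2, Finset.card_le_card (filterA_subset r x T t hz)⟩

private lemma nearestIn_mono (T : Finset V) {s s' : ℕ} (h : s ≤ s') :
    nearestIn r x T s ⊆ nearestIn r x T s' := by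
  intro z hz
  simp only [nearestIn, Finset.mem_filter] at hz ⊢
  exact ⟨hz.1, hz.2.trans h⟩

private lemma nearestIn_subset_inter (T : Finset V) {t s : ℕ}
    (hs : s ≤ (nearest r x t ∩ T).card) :
    nearestIn r x T s ⊆ nearest r x t ∩ T := by
  intro z hz
  simp only [nearestIn, Finset.mem_filter] at hz
  by_contra hzM
  have hzt : t ≤ r x z := by
    by_contra h
    exact hzM (Finset.mem_inter.2 ⟨by
      simp only [nearest, Finset.mem_filter]
      exact ⟨Finset.mem_univ z, by omega⟩, hz.1⟩)
  have hins : insert z (nearest r x t ∩ T) ⊆ T.filter (fun w => r x w ≤ r x z) := by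
    intro w hw
    rcases Finset.mem_insert.1 hw with rfl | hw
    · exact Finset.mem_filter.2 ⟨hz.1, le_refl _⟩
    · have h1 := Finset.mem_inter.1 hw
      have h2 : r x w < t := by
        have := h1.1
        simp only [nearest, Finset.mem_filter] at this
        exact this.2
      exact Finset.mem_filter.2 ⟨h1.2, by omega⟩
  have hcard := Finset.card_le_card hins
  rw [Finset.card_insert_of_notMem hzM] at hcard
  omega

private lemma sdiff_nearestIn_card (hinj : Function.Injective (r x)) (T : Finset V)
    (t s : ℕ) :
    ((nearest r x t ∩ T) \ nearestIn r x T s).card ≤ (nearest r x t ∩ T).card - s := by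
  set M : Finset V := nearest r x t ∩ T with hM
  have hsubT : M \ nearestIn r x T s ⊆ T := fun z hz =>
    (Finset.mem_inter.1 (Finset.mem_sdiff.1 hz).1).2
  have himg : (M \ nearestIn r x T s).image
      (fun z => (T.filter fun w => r x w ≤ r x z).card) ⊆ Finset.Ioc s M.card := by
    intro m hm
    simp only [Finset.mem_image] at hm
    obtain ⟨z, hz, rfl⟩ := hm
    rw [Finset.mem_sdiff] at hz
    have hzT : z ∈ T := (Finset.mem_inter.1 hz.1).2
    have h1 : ¬ ((T.filter fun w => r x w ≤ r x z).card ≤ s) := by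
      intro h
      exact hz.2 (by simp only [nearestIn, Finset.mem_filter]; exact ⟨hzT, h⟩)
    have h2 : (T.filter fun w => r x w ≤ r x z).card ≤ M.card :=
      Finset.card_le_card (filterA_subset r x T t hz.1)
    exact Finset.mem_Ioc.2 ⟨by omega, h2⟩
  have hinjOn := (pos_injOn r x hinj T).mono (Finset.coe_subset.2 hsubT)
  calc (M \ nearestIn r x T s).card
      = ((M \ nearestIn r x T s).image
          (fun z => (T.filter fun w => r x w ≤ r x z).card)).card :=
        (Finset.card_image_of_injOn hinjOn).symm
    _ ≤ (Finset.Ioc s M.card).card := Finset.card_le_card himg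
    _ = M.card - s := Nat.card_Ioc s M.card

/-- Bound for a good point `x` of a cluster `Ci` with `t ≤ |Ci|`: at most `(α+ν)n` of
its `t` nearest neighbors lie outside `Ci \ B`. -/
private lemma lemX (Ci B : Finset V)
    (hinj : Function.Injective (r x)) (hlt : ∀ y, r x y < Fintype.card V)
    {t : ℕ} (htn : t ≤ Fintype.card V) (hti : t ≤ Ci.card)
    {α ν : ℝ}
    (hgood : (((nearestIn r x (univ \ B) ((Ci \ B).card)) \ (Ci \ B)).card : ℝ)
      ≤ α * (Fintype.card V))
    (hB : (B.card : ℝ) ≤ ν * (Fintype.card V)) :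
    ((nearest r x t \ (Ci \ B)).card : ℝ)
      ≤ α * (Fintype.card V) + ν * (Fintype.card V) := by
  classical
  set G : Finset V := univ \ B with hG
  set M : Finset V := nearest r x t ∩ G with hMdef
  set s : ℕ := (Ci \ B).card with hsdef
  have hNc : (nearest r x t).card = t := card_nearest r x hinj hlt htn
  have hCiG : Ci \ B ⊆ G := Finset.sdiff_subset_sdiff (Finset.subset_univ Ci) (le_refl B)
  have hsG : s ≤ G.card := Finset.card_le_card hCiG
  have hNB : nearest r x t \ G ⊆ B := by
    intro z hz
    rw [Finset.mem_sdiff] at hz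
    have := hz.2
    simp only [hG, Finset.mem_sdiff, Finset.mem_univ, true_and] at this
    exact not_not.1 this
  have hNBcard : (nearest r x t \ G).card ≤ B.card := Finset.card_le_card hNB
  by_cases hc : M.card ≤ s
  · -- few good neighbors, all among the first `s` nearest in `G`
    have hMsub : M ⊆ nearestIn r x G s :=
      (inter_subset_nearestIn r x G t).trans (nearestIn_mono r x G hc)
    have hsplit : nearest r x t \ (Ci \ B) ⊆
        (nearest r x t \ G) ∪ (nearestIn r x G s \ (Ci \ B)) := by
      intro z hz
      rw [Finset.mem_sdiff] at hz
      by_cases hzG : z ∈ G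
      · exact Finset.mem_union_right _
          (Finset.mem_sdiff.2 ⟨hMsub (Finset.mem_inter.2 ⟨hz.1, hzG⟩), hz.2⟩)
      · exact Finset.mem_union_left _ (Finset.mem_sdiff.2 ⟨hz.1, hzG⟩)
    have h1 : (nearest r x t \ (Ci \ B)).card
        ≤ (nearest r x t \ G).card + (nearestIn r x G s \ (Ci \ B)).card :=
      le_trans (Finset.card_le_card hsplit) (Finset.card_union_le _ _)
    have h2 : ((nearest r x t \ G).card : ℝ) ≤ ν * (Fintype.card V) :=
      le_trans (by exact_mod_cast hNBcard) hB
    have h1' : ((nearest r x t \ (Ci \ B)).card : ℝ)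
        ≤ ((nearest r x t \ G).card : ℝ) + ((nearestIn r x G s \ (Ci \ B)).card : ℝ) := by
      exact_mod_cast h1
    linarith
  · -- the first `s` nearest in `G` are all within the `t` nearest
    have hsM : s ≤ M.card := by omega
    have h1 : nearestIn r x G s ⊆ M := nearestIn_subset_inter r x G hsM
    have h2 : (nearestIn r x G s).card = s := card_nearestIn r x hinj G hsG
    have h3 : (nearestIn r x G s ∩ (Ci \ B)).card
        + (nearestIn r x G s \ (Ci \ B)).card = s :=
      (Finset.card_inter_add_card_sdiff (nearestIn r x G s) (Ci \ B)).trans h2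
    have h4 : nearestIn r x G s ∩ (Ci \ B) ⊆ nearest r x t ∩ (Ci \ B) :=
      Finset.inter_subset_inter (h1.trans Finset.inter_subset_left) (le_refl _)
    have h5 : (nearest r x t ∩ (Ci \ B)).card + (nearest r x t \ (Ci \ B)).card = t :=
      (Finset.card_inter_add_card_sdiff (nearest r x t) (Ci \ B)).trans hNc
    have h6 : Ci.card ≤ s + B.card := by
      have : Ci ⊆ (Ci \ B) ∪ B := by
        intro z hz
        by_cases hzB : z ∈ B
        · exact Finset.mem_union_right _ hzB
        · exact Finset.mem_union_left _ (Finset.mem_sdiff.2 ⟨hz, hzB⟩)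
      calc Ci.card ≤ ((Ci \ B) ∪ B).card := Finset.card_le_card this
        _ ≤ s + B.card := Finset.card_union_le _ _
    have h7 := Finset.card_le_card h4
    -- now cast everything to ℝ
    have c3 : ((nearestIn r x G s ∩ (Ci \ B)).card : ℝ)
        + ((nearestIn r x G s \ (Ci \ B)).card : ℝ) = (s : ℝ) := by exact_mod_cast h3
    have c5 : ((nearest r x t ∩ (Ci \ B)).card : ℝ)
        + ((nearest r x t \ (Ci \ B)).card : ℝ) = (t : ℝ) := by exact_mod_cast h5
    have c6 : (Ci.card : ℝ) ≤ (s : ℝ) + (B.card : ℝ) := by exact_mod_cast h6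
    have c7 : ((nearestIn r x G s ∩ (Ci \ B)).card : ℝ)
        ≤ ((nearest r x t ∩ (Ci \ B)).card : ℝ) := by exact_mod_cast h7
    have cti : (t : ℝ) ≤ (Ci.card : ℝ) := by exact_mod_cast hti
    linarith

/-- Bound for a good point `y` of a cluster `Cj`: among its `t` nearest neighbors that
are good, at most `αn + (m − |Cj \ B|)` lie outside `Cj \ B`. -/
private lemma lemY (Cj B : Finset V)
    (hinj : Function.Injective (r x)) (t : ℕ) {α : ℝ}
    (hgood : (((nearestIn r x (univ \ B) ((Cj \ B).card)) \ (Cj \ B)).card : ℝ)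
      ≤ α * (Fintype.card V)) :
    (((nearest r x t ∩ (univ \ B)) \ (Cj \ B)).card : ℝ)
      ≤ α * (Fintype.card V)
        + (((nearest r x t ∩ (univ \ B)).card - (Cj \ B).card : ℕ) : ℝ) := by
  classical
  set G : Finset V := univ \ B with hG
  set M : Finset V := nearest r x t ∩ G with hMdef
  set s : ℕ := (Cj \ B).card with hsdef
  have hsplit : M \ (Cj \ B) ⊆
      (nearestIn r x G s \ (Cj \ B)) ∪ (M \ nearestIn r x G s) := by
    intro z hz
    rw [Finset.mem_sdiff] at hz
    by_cases hzN : z ∈ nearestIn r x G s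
    · exact Finset.mem_union_left _ (Finset.mem_sdiff.2 ⟨hzN, hz.2⟩)
    · exact Finset.mem_union_right _ (Finset.mem_sdiff.2 ⟨hz.1, hzN⟩)
  have h1 : (M \ (Cj \ B)).card
      ≤ (nearestIn r x G s \ (Cj \ B)).card + (M \ nearestIn r x G s).card :=
    le_trans (Finset.card_le_card hsplit) (Finset.card_union_le _ _)
  have h2 : (M \ nearestIn r x G s).card ≤ M.card - s :=
    sdiff_nearestIn_card r x hinj G t s
  have h12 : (M \ (Cj \ B)).card ≤ (nearestIn r x G s \ (Cj \ B)).card + (M.card - s) := by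
    omega
  have h12' : ((M \ (Cj \ B)).card : ℝ)
      ≤ ((nearestIn r x G s \ (Cj \ B)).card : ℝ) + ((M.card - s : ℕ) : ℝ) := by
    exact_mod_cast h12
  linarith

end Helpers

theorem good_points_different_clusters_few_common_neighbors
    {V : Type*} [Fintype V] [DecidableEq V] {k : ℕ}
    (r : V → V → ℕ) (C : Fin k → Finset V) (α ν : ℝ) (B : Finset V)
    (hn : 0 < Fintype.card V)
    (hα : 0 ≤ α) (hν : 0 ≤ ν)
    (hrinj : ∀ x : V, Function.Injective (r x))
    (hrlt : ∀ x y : V, r x y < Fintype.card V)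
    (hdis : ∀ i j : Fin k, i ≠ j → Disjoint (C i) (C j))
    (hcov : ∀ x : V, ∃ i : Fin k, x ∈ C i)
    (hB : (B.card : ℝ) ≤ ν * (Fintype.card V))
    (hgood : GoodCond r C α B)
    (hlarge : ∀ j : Fin k, 6 * (α + ν) * (Fintype.card V) < ((C j).card : ℝ))
    (i j : Fin k) (hij : j ≠ i)
    (t : ℕ) (htlo : 6 * (α + ν) * (Fintype.card V) < (t : ℝ))
    (hthi : t ≤ (C i).card) (htn : t ≤ Fintype.card V)
    (x : V) (hx : x ∈ C i \ B) (y : V) (hy : y ∈ C j \ B) :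
    (((nearest r x t) ∩ (nearest r y t)).card : ℝ)
        < (t : ℝ) - 4 * (α + ν) * (Fintype.card V) ∧
    (((nearest r x t) ∩ (nearest r y t)).card : ℝ)
        < (t : ℝ) - 2 * (α + ν) * (Fintype.card V) := by
  classical
  set n : ℕ := Fintype.card V with hndef
  set N : ℝ := (n : ℝ) with hNdef
  have hN0 : (0 : ℝ) ≤ N := Nat.cast_nonneg n
  have haN : 0 ≤ α * N := mul_nonneg hα hN0
  have hvN : 0 ≤ ν * N := mul_nonneg hν hN0
  set G : Finset V := univ \ B with hGdef
  set Gi : Finset V := C i \ B with hGidef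
  set Gj : Finset V := C j \ B with hGjdef
  -- x's t nearest neighbors: at most (α+ν)n outside Gi
  have hXbound : ((nearest r x t \ Gi).card : ℝ) ≤ α * N + ν * N :=
    lemX r x (C i) B (hrinj x) (hrlt x) htn hthi (hgood i x hx) hB
  -- y's t nearest good neighbors: few outside Gj
  have hYbound : (((nearest r y t ∩ G) \ Gj).card : ℝ)
      ≤ α * N + (((nearest r y t ∩ G).card - Gj.card : ℕ) : ℝ) :=
    lemY r y (C j) B (hrinj y) t (hgood j y hy)
  -- the intersection decomposes
  have hdisj : Disjoint (C i) (C j) := hdis i j hij.symm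
  have hsplit : nearest r x t ∩ nearest r y t ⊆
      (nearest r x t \ Gi) ∪ ((nearest r y t ∩ G) \ Gj) := by
    intro z hz
    rw [Finset.mem_inter] at hz
    by_cases hzGi : z ∈ Gi
    · refine Finset.mem_union_right _ (Finset.mem_sdiff.2 ⟨Finset.mem_inter.2 ⟨hz.2, ?_⟩, ?_⟩)
      · exact Finset.sdiff_subset_sdiff (Finset.subset_univ (C i)) (le_refl B) hzGi
      · intro hzGj
        have hzi : z ∈ C i := (Finset.mem_sdiff.1 hzGi).1
        have hzj : z ∈ C j := (Finset.mem_sdiff.1 hzGj).1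
        exact (Finset.disjoint_left.1 hdisj) hzi hzj
    · exact Finset.mem_union_left _ (Finset.mem_sdiff.2 ⟨hz.1, hzGi⟩)
  have hcard : ((nearest r x t ∩ nearest r y t).card : ℝ)
      ≤ ((nearest r x t \ Gi).card : ℝ) + (((nearest r y t ∩ G) \ Gj).card : ℝ) := by
    have := le_trans (Finset.card_le_card hsplit) (Finset.card_union_le _ _)
    exact_mod_cast this
  -- bound the leftover term
  set m : ℕ := (nearest r y t ∩ G).card with hmdef
  have hmt : m ≤ t := by
    have h1 : (nearest r y t ∩ G).card ≤ (nearest r y t).card :=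
      Finset.card_le_card Finset.inter_subset_left
    have h2 : (nearest r y t).card = t := card_nearest r y (hrinj y) (hrlt y) htn
    omega
  have hCjcard : (C j).card ≤ Gj.card + B.card := by
    have hsub : C j ⊆ Gj ∪ B := by
      intro z hz
      by_cases hzB : z ∈ B
      · exact Finset.mem_union_right _ hzB
      · exact Finset.mem_union_left _ (Finset.mem_sdiff.2 ⟨hz, hzB⟩)
    calc (C j).card ≤ (Gj ∪ B).card := Finset.card_le_card hsub
      _ ≤ Gj.card + B.card := Finset.card_union_le _ _
  have hCj : 6 * (α + ν) * N < ((C j).card : ℝ) := hlarge j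
  have hleft : (((m - Gj.card : ℕ) : ℝ)) < max 0 ((t : ℝ) - 6 * (α + ν) * N + ν * N) ∨
      ((m - Gj.card : ℕ) : ℝ) = 0 := by
    by_cases hms : m ≤ Gj.card
    · right
      rw [Nat.sub_eq_zero_of_le hms]
      norm_num
    · left
      have hms' : Gj.card ≤ m := by omega
      have hcast : ((m - Gj.card : ℕ) : ℝ) = (m : ℝ) - (Gj.card : ℝ) :=
        Nat.cast_sub hms'
      have h1 : (m : ℝ) ≤ (t : ℝ) := by exact_mod_cast hmt
      have h2 : ((C j).card : ℝ) ≤ (Gj.card : ℝ) + (B.card : ℝ) := by exact_mod_cast hCjcard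
      have h3 : ((m - Gj.card : ℕ) : ℝ) < (t : ℝ) - 6 * (α + ν) * N + ν * N := by
        rw [hcast]; linarith
      exact lt_of_lt_of_le h3 (le_max_right _ _)
  have hmain : ((nearest r x t ∩ nearest r y t).card : ℝ) < (t : ℝ) - 4 * (α + ν) * N := by
    rcases hleft with h | h
    · rcases le_or_gt ((t : ℝ) - 6 * (α + ν) * N + ν * N) 0 with h0 | h0
      · rw [max_eq_left h0] at h
        have : ((m - Gj.card : ℕ) : ℝ) ≥ 0 := Nat.cast_nonneg _
        linarith
      · rw [max_eq_right h0.le] at h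
        linarith
    · rw [h] at hYbound
      linarith
  refine ⟨hmain, lt_of_lt_of_le hmain ?_⟩
  have : 0 ≤ (α + ν) * N := mul_nonneg (by linarith) hN0
  linarith
end

section
/- Suppose the similarity ranking satisfies the (α,ν)-good neighborhood property. Let t be an integer with 1 ≤ t ≤ n_{C_i}, let x ∈ G_i be a good point of C_i, and let z ∈ S be any point. If |N_t(x) ∩ N_t(z)| ≥ t − 2(α+ν)n, then z has at least t − 3(α+ν)n of its t nearest neighbors in C_i, i.e. |N_t(z) ∩ C_i| ≥ t − 3(α+ν)n, and consequently |N_t(z) ∖ C_i| ≤ 3(α+ν)n. -/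
open Finset

lemma nearest_card' {V : Type*} [Fintype V] [DecidableEq V] (r : V → V → ℕ) (x : V) (t : ℕ)
    (hinj : Function.Injective (r x)) (hlt : ∀ y, r x y < Fintype.card V)
    (ht : t ≤ Fintype.card V) : (nearest r x t).card = t := by
  have himg : Finset.univ.image (r x) = Finset.range (Fintype.card V) := by
    apply Finset.eq_of_subset_of_card_le
    · intro v hv
      simp only [Finset.mem_image] at hv
      obtain ⟨y, -, rfl⟩ := hv
      exact Finset.mem_range.mpr (hlt y)
    · rw [Finset.card_range, Finset.card_image_of_injective _ hinj, Finset.card_univ]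
  calc (nearest r x t).card
      = ((Finset.univ.filter fun y => r x y < t).image (r x)).card :=
        (Finset.card_image_of_injective _ hinj).symm
    _ = ((Finset.univ.image (r x)).filter (· < t)).card := by
        rw [Finset.filter_image]
    _ = t := by
        rw [himg]
        have h : (Finset.range (Fintype.card V)).filter (· < t) = Finset.range t := by
          ext a; simp only [Finset.mem_filter, Finset.mem_range]; omega
        rw [h, Finset.card_range]

lemma rank_bound' {V : Type*} [DecidableEq V] (f : V → ℕ) (hinj : Function.Injective f)
    (T : Finset V) (s : ℕ) :
    (T.filter fun y => s < (T.filter fun z => f z ≤ f y).card).card ≤ T.card - s := by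
  set c : V → ℕ := fun y => (T.filter fun z => f z ≤ f y).card with hc
  have hkey : ∀ a ∈ T, ∀ b ∈ T, c a = c b → f a ≤ f b → a = b := by
    intro a ha b hb hab hfab
    have hsub : T.filter (fun z => f z ≤ f a) ⊆ T.filter (fun z => f z ≤ f b) := by
      intro w hw
      rw [Finset.mem_filter] at hw ⊢
      exact ⟨hw.1, hw.2.trans hfab⟩
    have heq := Finset.eq_of_subset_of_card_le hsub (le_of_eq hab.symm)
    have hbmem : b ∈ T.filter (fun z => f z ≤ f a) := by
      rw [heq]; exact Finset.mem_filter.mpr ⟨hb, le_rfl⟩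
    exact hinj (le_antisymm hfab (Finset.mem_filter.mp hbmem).2)
  have hinjOn : Set.InjOn c T := by
    intro a ha b hb hab
    rcases le_total (f a) (f b) with h | h
    · exact hkey a ha b hb hab h
    · exact (hkey b hb a ha hab.symm h).symm
  have h1 : (T.filter fun y => s < c y).card
      = ((T.filter fun y => s < c y).image c).card :=
    (Finset.card_image_of_injOn (hinjOn.mono (fun y hy => (Finset.mem_filter.mp hy).1))).symm
  have h2 : (T.filter fun y => s < c y).image c ⊆ Finset.Ioc s T.card := by
    intro v hv
    simp only [Finset.mem_image, Finset.mem_filter] at hv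
    obtain ⟨y, ⟨hyT, hys⟩, rfl⟩ := hv
    exact Finset.mem_Ioc.mpr ⟨hys, Finset.card_filter_le _ _⟩
  calc (T.filter fun y => s < c y).card
      = ((T.filter fun y => s < c y).image c).card := h1
    _ ≤ (Finset.Ioc s T.card).card := Finset.card_le_card h2
    _ = T.card - s := Nat.card_Ioc s T.card

lemma cluster_capture {V : Type*} [Fintype V] [DecidableEq V] {k : ℕ} (r : V → V → ℕ)
    (C : Fin k → Finset V) (α ν : ℝ) (B : Finset V)
    (hrinj : ∀ x : V, Function.Injective (r x))
    (hrlt : ∀ x y : V, r x y < Fintype.card V)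
    (hB : (B.card : ℝ) ≤ ν * (Fintype.card V))
    (hgood : GoodCond r C α B)
    (i : Fin k) (t : ℕ) (hthi : t ≤ (C i).card)
    (x : V) (hx : x ∈ C i \ B) :
    ((nearest r x t \ C i).card : ℝ) ≤ (α + ν) * (Fintype.card V) := by
  classical
  set n := Fintype.card V with hn
  set N := nearest r x t with hN
  set G := (Finset.univ : Finset V) \ B with hG
  set Gi := C i \ B with hGi
  set NI := nearestIn r x G Gi.card with hNI
  set T := N ∩ G with hT
  set S0 := T \ NI with hS0
  have htn : t ≤ n := hthi.trans (Finset.card_le_univ _)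
  have hNcard : N.card = t := nearest_card' r x t (hrinj x) (fun y => hrlt x y) htn
  -- cover
  have hcover : N \ C i ⊆ ((N \ C i) ∩ B) ∪ ((NI \ Gi) ∪ S0) := by
    intro y hy
    have hyN := (Finset.mem_sdiff.mp hy).1
    have hyC := (Finset.mem_sdiff.mp hy).2
    by_cases hyB : y ∈ B
    · exact Finset.mem_union_left _ (Finset.mem_inter.mpr ⟨hy, hyB⟩)
    · have hyG : y ∈ G := Finset.mem_sdiff.mpr ⟨Finset.mem_univ y, hyB⟩
      by_cases hyNI : y ∈ NI
      · refine Finset.mem_union_right _ (Finset.mem_union_left _ ?_)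
        refine Finset.mem_sdiff.mpr ⟨hyNI, ?_⟩
        intro hcon
        exact hyC (Finset.mem_sdiff.mp hcon).1
      · exact Finset.mem_union_right _ (Finset.mem_union_right _
          (Finset.mem_sdiff.mpr ⟨Finset.mem_inter.mpr ⟨hyN, hyG⟩, hyNI⟩))
  -- S0 bound
  have hS0sub : S0 ⊆ T.filter fun y => Gi.card < (T.filter fun z => r x z ≤ r x y).card := by
    intro y hy
    obtain ⟨hyT, hyNI⟩ := Finset.mem_sdiff.mp hy
    have hyG : y ∈ G := (Finset.mem_inter.mp hyT).2
    refine Finset.mem_filter.mpr ⟨hyT, ?_⟩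
    have hnot : ¬ (G.filter fun z => r x z ≤ r x y).card ≤ Gi.card := by
      intro hcon
      exact hyNI (Finset.mem_filter.mpr ⟨hyG, hcon⟩)
    have hsub : (G.filter fun z => r x z ≤ r x y) ⊆ (T.filter fun z => r x z ≤ r x y) := by
      intro w hw
      obtain ⟨hwG, hwr⟩ := Finset.mem_filter.mp hw
      have hyN : y ∈ N := (Finset.mem_inter.mp hyT).1
      have hyt : r x y < t := (Finset.mem_filter.mp hyN).2
      have hwN : w ∈ N := Finset.mem_filter.mpr ⟨Finset.mem_univ w, lt_of_le_of_lt hwr hyt⟩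
      exact Finset.mem_filter.mpr ⟨Finset.mem_inter.mpr ⟨hwN, hwG⟩, hwr⟩
    have := Finset.card_le_card hsub
    omega
  have hS0card : S0.card ≤ t - Gi.card := by
    have h1 := Finset.card_le_card hS0sub
    have h2 := rank_bound' (r x) (hrinj x) T Gi.card
    have h3 : T.card ≤ N.card := Finset.card_le_card Finset.inter_subset_left
    omega
  -- bad-part arithmetic in ℕ
  have hBpart : ((N \ C i) ∩ B).card + S0.card ≤ B.card := by
    have hb1 : ((N \ C i) ∩ B).card ≤ (B \ C i).card := by
      apply Finset.card_le_card
      intro y hy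
      obtain ⟨hy1, hy2⟩ := Finset.mem_inter.mp hy
      exact Finset.mem_sdiff.mpr ⟨hy2, (Finset.mem_sdiff.mp hy1).2⟩
    have hb2 : (C i ∩ B).card + (C i \ B).card = (C i).card :=
      Finset.card_inter_add_card_sdiff _ _
    have hb3 : (B ∩ C i).card + (B \ C i).card = B.card :=
      Finset.card_inter_add_card_sdiff _ _
    have hb4 : (C i ∩ B).card = (B ∩ C i).card := by rw [Finset.inter_comm]
    have hGicard : Gi.card = (C i \ B).card := rfl
    omega
  have hmain : (N \ C i).card ≤ (NI \ Gi).card + B.card := by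
    have h1 := Finset.card_le_card hcover
    have h2 := Finset.card_union_le ((N \ C i) ∩ B) ((NI \ Gi) ∪ S0)
    have h3 := Finset.card_union_le (NI \ Gi) S0
    omega
  have hα' : ((NI \ Gi).card : ℝ) ≤ α * n := hgood i x hx
  have hcast : ((N \ C i).card : ℝ) ≤ ((NI \ Gi).card : ℝ) + (B.card : ℝ) := by
    exact_mod_cast hmain
  have : ((N \ C i).card : ℝ) ≤ α * n + ν * n := by linarith
  linarith [this]

theorem shared_neighbors_force_cluster_neighbors
    {V : Type*} [Fintype V] [DecidableEq V] {k : ℕ}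
    (r : V → V → ℕ) (C : Fin k → Finset V) (α ν : ℝ) (B : Finset V)
    (hn : 0 < Fintype.card V)
    (hα : 0 ≤ α) (hν : 0 ≤ ν)
    (hrinj : ∀ x : V, Function.Injective (r x))
    (hrlt : ∀ x y : V, r x y < Fintype.card V)
    (hdis : ∀ i j : Fin k, i ≠ j → Disjoint (C i) (C j))
    (hcov : ∀ x : V, ∃ i : Fin k, x ∈ C i)
    (hB : (B.card : ℝ) ≤ ν * (Fintype.card V))
    (hgood : GoodCond r C α B)
    (i : Fin k) (t : ℕ) (htlo : 1 ≤ t) (hthi : t ≤ (C i).card)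
    (x : V) (hx : x ∈ C i \ B) (z : V)
    (hshare : (t : ℝ) - 2 * (α + ν) * (Fintype.card V)
        ≤ (((nearest r x t) ∩ (nearest r z t)).card : ℝ)) :
    (t : ℝ) - 3 * (α + ν) * (Fintype.card V)
        ≤ (((nearest r z t) ∩ (C i)).card : ℝ) ∧
    (((nearest r z t) \ (C i)).card : ℝ) ≤ 3 * (α + ν) * (Fintype.card V) := by
  classical
  set n := Fintype.card V with hnn
  set Nx := nearest r x t with hNx
  set Nz := nearest r z t with hNz
  have htn : t ≤ n := hthi.trans (Finset.card_le_univ _)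
  have hkey : ((Nx \ C i).card : ℝ) ≤ (α + ν) * n :=
    cluster_capture r C α ν B hrinj hrlt hB hgood i t hthi x hx
  have hNzcard : Nz.card = t := nearest_card' r z t (hrinj z) (fun y => hrlt z y) htn
  set I := Nx ∩ Nz with hI
  -- |I ∩ C i| ≥ |I| - |Nx \ C i|
  have hIsplit : (I ∩ C i).card + (I \ C i).card = I.card :=
    Finset.card_inter_add_card_sdiff _ _
  have hIsd : (I \ C i).card ≤ (Nx \ C i).card := by
    apply Finset.card_le_card
    intro y hy
    obtain ⟨hy1, hy2⟩ := Finset.mem_sdiff.mp hy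
    exact Finset.mem_sdiff.mpr ⟨(Finset.mem_inter.mp hy1).1, hy2⟩
  have hIsub : (I ∩ C i).card ≤ (Nz ∩ C i).card := by
    apply Finset.card_le_card
    intro y hy
    obtain ⟨hy1, hy2⟩ := Finset.mem_inter.mp hy
    exact Finset.mem_inter.mpr ⟨(Finset.mem_inter.mp hy1).2, hy2⟩
  have hcast1 : ((I ∩ C i).card : ℝ) + ((I \ C i).card : ℝ) = (I.card : ℝ) := by
    exact_mod_cast hIsplit
  have hcast2 : ((I \ C i).card : ℝ) ≤ ((Nx \ C i).card : ℝ) := by exact_mod_cast hIsd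
  have hcast3 : ((I ∩ C i).card : ℝ) ≤ ((Nz ∩ C i).card : ℝ) := by exact_mod_cast hIsub
  have h1 : (t : ℝ) - 3 * (α + ν) * n ≤ ((Nz ∩ C i).card : ℝ) := by linarith
  refine ⟨h1, ?_⟩
  have hNzsplit : (Nz ∩ C i).card + (Nz \ C i).card = Nz.card :=
    Finset.card_inter_add_card_sdiff _ _
  have hcast4 : ((Nz ∩ C i).card : ℝ) + ((Nz \ C i).card : ℝ) = (t : ℝ) := by
    rw [← hNzcard]; exact_mod_cast hNzsplit
  linarith
end

section
/- Suppose the similarity ranking satisfies the (α,ν)-good neighborhood property for the clustering (C_1,…,C_k) and every cluster satisfies |C_i| > 7(α+ν)n. Then for every real β with 0 < β ≤ 1, the similarity ranking satisfies the weak (α,β,ν)-good neighborhood property for the same clustering. -/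
open Finset

/-- The `(α,ν)`-good neighborhood property: some set `B` of at most `ν·n` bad points
witnesses the good-neighborhood condition. -/
def GoodNbhd {V : Type*} [Fintype V] [DecidableEq V] {k : ℕ} (r : V → V → ℕ)
    (C : Fin k → Finset V) (α ν : ℝ) : Prop :=
  ∃ B : Finset V, (B.card : ℝ) ≤ ν * (Fintype.card V) ∧ GoodCond r C α B

/-- The weak `(α,β,ν)`-good neighborhood property. -/
def WeakGoodNbhd {V : Type*} [Fintype V] [DecidableEq V] {k : ℕ} (r : V → V → ℕ)
    (C : Fin k → Finset V) (α β ν : ℝ) : Prop :=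
  ∃ B : Finset V, (B.card : ℝ) ≤ ν * (Fintype.card V) ∧
    (∀ i : Fin k, ∀ p ∈ C i \ B, ∃ A : Finset V, A ⊆ C i \ B ∧ p ∈ A ∧
        6 * (α + ν) * (Fintype.card V) < (A.card : ℝ) ∧
        ∀ x ∈ A, (((nearestIn r x (Finset.univ \ B) A.card) \ A).card : ℝ)
          ≤ α * (Fintype.card V)) ∧
    (∀ i : Fin k, ∀ A : Finset V, A ⊆ C i \ B →
        6 * (α + ν) * (Fintype.card V) < (A.card : ℝ) →
        (∀ x ∈ A, (((nearestIn r x (Finset.univ \ B) A.card) \ A).card : ℝ)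
          ≤ α * (Fintype.card V)) →
        β * (A.card : ℝ) ≤
          ((A.filter fun x =>
              (((nearestIn r x (Finset.univ \ B) ((C i \ B).card)) \ (C i \ B)).card : ℝ)
                ≤ α * (Fintype.card V)).card : ℝ))

theorem goodNbhd_implies_weakGoodNbhd
    {V : Type*} [Fintype V] [DecidableEq V] {k : ℕ}
    (r : V → V → ℕ) (C : Fin k → Finset V) (α ν : ℝ)
    (hn : 0 < Fintype.card V) (hα : 0 ≤ α) (hν : 0 ≤ ν)
    (hrinj : ∀ x : V, Function.Injective (r x))
    (hrlt : ∀ x y : V, r x y < Fintype.card V)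
    (hdis : ∀ i j : Fin k, i ≠ j → Disjoint (C i) (C j))
    (hcov : ∀ x : V, ∃ i : Fin k, x ∈ C i)
    (hgood : GoodNbhd r C α ν)
    (hlarge : ∀ i : Fin k, 7 * (α + ν) * (Fintype.card V) < ((C i).card : ℝ)) :
    ∀ β : ℝ, 0 < β → β ≤ 1 → WeakGoodNbhd r C α β ν := by
  intro β hβ0 hβ1
  obtain ⟨B, hB, hG⟩ := hgood
  refine ⟨B, hB, ?_, ?_⟩
  · intro i p hp
    refine ⟨C i \ B, Finset.Subset.refl _, hp, ?_, hG i⟩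
    have h1 := hlarge i
    have h2 : ((C i).card : ℝ) ≤ ((C i \ B).card : ℝ) + (B.card : ℝ) := by
      exact_mod_cast Finset.card_le_card_sdiff_add_card
    have hn' : (0:ℝ) ≤ (Fintype.card V : ℝ) := Nat.cast_nonneg _
    nlinarith [mul_nonneg hα hn']
  · intro i A hA hAcard hAgood
    have hfilt : (A.filter fun x =>
        (((nearestIn r x (Finset.univ \ B) ((C i \ B).card)) \ (C i \ B)).card : ℝ)
          ≤ α * (Fintype.card V)) = A :=
      Finset.filter_true_of_mem (fun x hx => hG i x (hA hx))
    rw [hfilt]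
    have : (0:ℝ) ≤ (A.card : ℝ) := Nat.cast_nonneg _
    nlinarith
end

section
/- Let X be a finite set, let β be a real number, let G ⊆ X, and suppose that to each p ∈ X is associated a set A(p) ⊆ X with p ∈ A(p), such that the family {A(p) : p ∈ X} is laminar (for all p, q ∈ X, either A(p) ∩ A(q) = ∅, or A(p) ⊆ A(q), or A(q) ⊆ A(p)), and such that |A(p) ∩ G| ≥ β·|A(p)| for every p ∈ X. Then |G ∩ X| ≥ β·|X|. -/
open Finset

theorem laminar_good_fraction
    {α : Type*} [DecidableEq α] (X : Finset α) (β : ℝ) (G : Finset α)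
    (A : α → Finset α)
    (hsub : ∀ p ∈ X, A p ⊆ X)
    (hmem : ∀ p ∈ X, p ∈ A p)
    (hlam : ∀ p ∈ X, ∀ q ∈ X,
      A p ∩ A q = ∅ ∨ A p ⊆ A q ∨ A q ⊆ A p)
    (hfrac : ∀ p ∈ X, β * ((A p).card : ℝ) ≤ (((A p) ∩ G).card : ℝ)) :
    β * (X.card : ℝ) ≤ ((G ∩ X).card : ℝ) := by
  classical
  generalize hn : X.card = n
  induction n using Nat.strong_induction_on generalizing X with
  | _ n ih =>
  subst hn
  rcases eq_or_ne X ∅ with hX | hX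
  · subst hX; simp
  · obtain ⟨p, hpX, hpmax⟩ :=
      Finset.exists_max_image X (fun p => (A p).card) (Finset.nonempty_of_ne_empty hX)
    set Y := X \ A p with hY
    have hApX : A p ⊆ X := hsub p hpX
    have hpAp : p ∈ A p := hmem p hpX
    have hYsub : Y ⊆ X := Finset.sdiff_subset
    have hYA : ∀ q ∈ Y, A q ⊆ Y := by
      intro q hq
      have hqX : q ∈ X := hYsub hq
      have hqnAp : q ∉ A p := (Finset.mem_sdiff.mp hq).2
      rcases hlam p hpX q hqX with hdisj | hsub' | hsub'
      · intro x hx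
        refine Finset.mem_sdiff.mpr ⟨hsub q hqX hx, fun hxAp => ?_⟩
        have : x ∈ A p ∩ A q := Finset.mem_inter.mpr ⟨hxAp, hx⟩
        simp [hdisj] at this
      · have : A p = A q :=
          Finset.eq_of_subset_of_card_le hsub' (hpmax q hqX)
        exact absurd (this ▸ hmem q hqX) hqnAp
      · exact absurd (hsub' (hmem q hqX)) hqnAp
    have hYlt : Y.card < X.card :=
      Finset.card_lt_card ⟨hYsub, fun h => (Finset.mem_sdiff.mp (h hpX)).2 hpAp⟩
    have hIH : β * (Y.card : ℝ) ≤ ((G ∩ Y).card : ℝ) := by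
      refine ih Y.card hYlt Y hYA (fun q hq => hmem q (hYsub hq))
        (fun q hq r hr => hlam q (hYsub hq) r (hYsub hr))
        (fun q hq => hfrac q (hYsub hq)) rfl
    have hcard : (Y.card : ℝ) + ((A p).card : ℝ) = (X.card : ℝ) := by
      exact_mod_cast Finset.card_sdiff_add_card_eq_card hApX
    have hdisj2 : Disjoint (A p ∩ G) (G ∩ Y) := by
      apply Finset.disjoint_left.mpr
      intro x hx hx2
      exact (Finset.mem_sdiff.mp (Finset.mem_inter.mp hx2).2).2 (Finset.mem_inter.mp hx).1
    have hunion : (A p ∩ G) ∪ (G ∩ Y) ⊆ G ∩ X := by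
      intro x hx
      rcases Finset.mem_union.mp hx with hx | hx
      · exact Finset.mem_inter.mpr ⟨(Finset.mem_inter.mp hx).2, hApX (Finset.mem_inter.mp hx).1⟩
      · exact Finset.mem_inter.mpr ⟨(Finset.mem_inter.mp hx).1, hYsub (Finset.mem_inter.mp hx).2⟩
    have hsumcard : ((A p ∩ G).card : ℝ) + ((G ∩ Y).card : ℝ) ≤ ((G ∩ X).card : ℝ) := by
      have := Finset.card_le_card hunion
      rw [Finset.card_union_of_disjoint hdisj2] at this
      exact_mod_cast this
    have hfp := hfrac p hpX
    have hsplit : β * (X.card : ℝ) = β * (Y.card : ℝ) + β * ((A p).card : ℝ) := by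
      rw [← hcard]; ring
    linarith
end

section
/- Let α, ν ≥ 0 be reals, let B ⊆ S with |B| ≤ νn, and let A be a nonempty subset of S ∖ B. Suppose every x ∈ A has at most αn of its |A| nearest neighbors within S∖B lying outside A. Then for every integer t with 1 ≤ t ≤ |A| + νn (and t ≤ n) and every x ∈ A, at most (α+ν)n of the t nearest neighbors of x in S lie outside A: |N_t(x) ∖ A| ≤ (α+ν)n. -/
open Finset

lemma countle_strictMono {V : Type*} [DecidableEq V] (g : V → ℕ)
    (T : Finset V) {y₁ y₂ : V} (h : g y₁ < g y₂) (hy₂ : y₂ ∈ T) :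
    (T.filter fun z => g z ≤ g y₁).card < (T.filter fun z => g z ≤ g y₂).card := by
  apply Finset.card_lt_card
  constructor
  · intro z hz; simp only [mem_filter] at *; exact ⟨hz.1, hz.2.trans h.le⟩
  · intro hsub
    have h2 : y₂ ∈ T.filter fun z => g z ≤ g y₂ := by simp [mem_filter, hy₂]
    have := hsub h2
    simp only [mem_filter] at this
    omega

lemma countle_card_ge {V : Type*} [DecidableEq V] (g : V → ℕ) (hg : Function.Injective g)
    (T : Finset V) (k : ℕ) (hk : k ≤ T.card) :
    k ≤ (T.filter fun y => (T.filter fun z => g z ≤ g y).card ≤ k).card := by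
  set f : V → ℕ := fun y => (T.filter fun z => g z ≤ g y).card with hf
  have hfinj : Set.InjOn f T := by
    intro y₁ h₁ y₂ h₂ he
    by_contra hne
    have hgne : g y₁ ≠ g y₂ := fun h => hne (hg h)
    rcases lt_or_gt_of_ne hgne with h | h
    · exact absurd he (Nat.ne_of_lt (countle_strictMono g T h h₂))
    · exact absurd he.symm (Nat.ne_of_lt (countle_strictMono g T h h₁))
  have himg : T.image f = Finset.Icc 1 T.card := by
    apply Finset.eq_of_subset_of_card_le
    · intro b hb
      simp only [mem_image] at hb
      obtain ⟨y, hy, rfl⟩ := hb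
      simp only [Finset.mem_Icc]
      constructor
      · have : y ∈ T.filter fun z => g z ≤ g y := by simp [hy]
        exact Finset.card_pos.mpr ⟨y, this⟩
      · exact Finset.card_le_card (Finset.filter_subset _ _)
    · rw [Nat.card_Icc]
      simp [Finset.card_image_of_injOn hfinj]
  have hNIimg : (T.filter fun y => f y ≤ k).image f = Finset.Icc 1 k := by
    ext b
    simp only [mem_image, mem_filter, Finset.mem_Icc]
    constructor
    · rintro ⟨y, ⟨hy, hyk⟩, rfl⟩
      refine ⟨?_, hyk⟩
      have : y ∈ T.filter fun z => g z ≤ g y := by simp [hy]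
      exact Finset.card_pos.mpr ⟨y, this⟩
    · rintro ⟨hb1, hb2⟩
      have : b ∈ T.image f := by rw [himg]; exact Finset.mem_Icc.mpr ⟨hb1, hb2.trans hk⟩
      simp only [mem_image] at this
      obtain ⟨y, hy, rfl⟩ := this
      exact ⟨y, ⟨hy, hb2⟩, rfl⟩
  have : ((T.filter fun y => f y ≤ k).image f).card = (T.filter fun y => f y ≤ k).card :=
    Finset.card_image_of_injOn (hfinj.mono (fun y hy => (Finset.mem_filter.mp hy).1))
  rw [hNIimg] at this
  rw [← this, Nat.card_Icc]
  omega



open Finset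

theorem local_neighborhood_mostly_inside
    {V : Type*} [Fintype V] [DecidableEq V]
    (r : V → V → ℕ) (α ν : ℝ) (B A : Finset V)
    (hn : 0 < Fintype.card V)
    (hα : 0 ≤ α) (hν : 0 ≤ ν)
    (hrinj : ∀ x : V, Function.Injective (r x))
    (hrlt : ∀ x y : V, r x y < Fintype.card V)
    (hB : (B.card : ℝ) ≤ ν * (Fintype.card V))
    (hAB : A ⊆ Finset.univ \ B) (hA : A.Nonempty)
    (hloc : ∀ x ∈ A,
      (((nearestIn r x (Finset.univ \ B) A.card) \ A).card : ℝ) ≤ α * (Fintype.card V)) :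
    ∀ t : ℕ, 1 ≤ t → (t : ℝ) ≤ (A.card : ℝ) + ν * (Fintype.card V) →
      t ≤ Fintype.card V → ∀ x ∈ A,
      (((nearest r x t) \ A).card : ℝ) ≤ (α + ν) * (Fintype.card V) := by
  intro t ht1 htub htn x hx
  set n := Fintype.card V with hn'
  set T : Finset V := Finset.univ \ B with hT
  set N : Finset V := nearest r x t with hN
  set NI : Finset V := nearestIn r x T A.card with hNI
  have hg := hrinj x
  have hNcard : N.card ≤ t := by
    have hsub : N.image (r x) ⊆ Finset.range t := by
      intro b hb
      simp only [mem_image] at hb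
      obtain ⟨y, hy, rfl⟩ := hb
      simp only [hN, nearest, mem_filter] at hy
      simpa using hy.2
    calc N.card = (N.image (r x)).card := (Finset.card_image_of_injective N hg).symm
    _ ≤ t := by simpa using Finset.card_le_card hsub
  have hAT : A ⊆ T := hAB
  have hsplit : (N \ A).card ≤ (N ∩ B).card + ((N \ B) \ A).card := by
    refine le_trans (Finset.card_le_card ?_) (Finset.card_union_le _ _)
    intro y hy
    simp only [mem_sdiff, mem_union, mem_inter] at *
    by_cases hyB : y ∈ B
    · exact Or.inl ⟨hy.1, hyB⟩
    · exact Or.inr ⟨⟨hy.1, hyB⟩, hy.2⟩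
  have hpart : (N ∩ B).card + (N \ B).card = N.card := Finset.card_inter_add_card_sdiff N B
  have hNIbound : ((NI \ A).card : ℝ) ≤ α * n := hloc x hx
  have hNBfilter : N \ B = T.filter fun z => r x z < t := by
    ext y
    simp only [hN, hT, nearest, mem_filter, mem_sdiff, mem_univ, true_and]
    tauto
  have hBn : ((N ∩ B).card : ℝ) ≤ ν * n :=
    le_trans (by exact_mod_cast Finset.card_le_card (Finset.inter_subset_right)) hB
  by_cases hcase : (N \ B).card ≤ A.card
  · have hsub : N \ B ⊆ NI := by
      intro y hy
      rw [hNBfilter] at hy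
      simp only [mem_filter] at hy
      simp only [hNI, nearestIn, mem_filter]
      refine ⟨hy.1, le_trans (Finset.card_le_card ?_) hcase⟩
      intro z hz
      simp only [mem_filter] at hz
      rw [hNBfilter]
      exact mem_filter.mpr ⟨hz.1, lt_of_le_of_lt hz.2 hy.2⟩
    have h1 : ((N \ B) \ A).card ≤ (NI \ A).card :=
      Finset.card_le_card (Finset.sdiff_subset_sdiff hsub (le_refl _))
    have h2 : (((N \ B) \ A).card : ℝ) ≤ α * n := le_trans (by exact_mod_cast h1) hNIbound
    calc (((N \ A).card : ℝ)) ≤ (N ∩ B).card + ((N \ B) \ A).card := by exact_mod_cast hsplit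
    _ ≤ ν * n + α * n := by linarith
    _ = (α + ν) * n := by ring
  · push_neg at hcase
    have hNIge : A.card ≤ NI.card := by
      have := countle_card_ge (r x) hg T A.card (Finset.card_le_card hAT)
      simpa [hNI, nearestIn] using this
    have hsub : NI ⊆ N \ B := by
      intro y hy
      simp only [hNI, nearestIn, mem_filter] at hy
      rw [hNBfilter]
      refine mem_filter.mpr ⟨hy.1, ?_⟩
      by_contra hge
      push_neg at hge
      have hss : (N \ B) ⊆ T.filter fun z => r x z ≤ r x y := by
        rw [hNBfilter]
        intro z hz
        simp only [mem_filter] at *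
        exact ⟨hz.1, le_trans (le_of_lt hz.2) hge⟩
      have := Finset.card_le_card hss
      omega
    have h1 : ((N \ B) \ A).card ≤ (NI \ A).card + ((N \ B).card - A.card) := by
      have hss : (N \ B) \ A ⊆ (NI \ A) ∪ ((N \ B) \ NI) := by
        intro y hy
        simp only [mem_sdiff, mem_union] at *
        by_cases hyNI : y ∈ NI
        · exact Or.inl ⟨hyNI, hy.2⟩
        · exact Or.inr ⟨hy.1, hyNI⟩
      have hdiff : ((N \ B) \ NI).card = (N \ B).card - NI.card := Finset.card_sdiff_of_subset hsub
      calc ((N \ B) \ A).card ≤ (NI \ A).card + ((N \ B) \ NI).card :=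
        le_trans (Finset.card_le_card hss) (Finset.card_union_le _ _)
      _ ≤ (NI \ A).card + ((N \ B).card - A.card) := by omega
    have hAle : A.card ≤ (N \ B).card := le_of_lt hcase
    have hcast : (((N \ B).card - A.card : ℕ) : ℝ) = ((N \ B).card : ℝ) - A.card := by
      exact Nat.cast_sub hAle
    have hbm : ((N ∩ B).card : ℝ) + ((N \ B).card : ℝ) ≤ (A.card : ℝ) + ν * n := by
      have h3 : (((N ∩ B).card + (N \ B).card : ℕ) : ℝ) ≤ (t : ℝ) := by
        exact_mod_cast hpart ▸ hNcard
      push_cast at h3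
      linarith
    have htot : (((N \ A).card : ℝ)) ≤ ((N ∩ B).card : ℝ) + (NI \ A).card
        + (((N \ B).card : ℝ) - A.card) := by
      have := le_trans hsplit (Nat.add_le_add_left h1 _)
      calc (((N \ A).card : ℝ)) ≤
          (((N ∩ B).card + ((NI \ A).card + ((N \ B).card - A.card)) : ℕ) : ℝ) := by
            exact_mod_cast this
      _ = ((N ∩ B).card : ℝ) + (NI \ A).card + (((N \ B).card : ℝ) - A.card) := by
            push_cast [hcast]; ring
    calc (((N \ A).card : ℝ)) ≤ ((N ∩ B).card : ℝ) + (NI \ A).card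
        + (((N \ B).card : ℝ) - A.card) := htot
    _ ≤ ν * n + α * n := by linarith
    _ = (α + ν) * n := by ring
end
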